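/- arXiv:1910.00852 — 3 statements merged into one kernel-verified Lean document; each statement's English description precedes it below -/
import Mathlib

section
/- For all integers n ≥ 3 and k ≥ 3, the augmented k-ary n-cube AQ_{n,k} is not (8n−9)-conditional strongly Menger edge connected; that is, there exists an edge set S ⊆ E(AQ_{n,k}) with |S| ≤ 8n−9 such that every vertex of AQ_{n,k} − S has degree at least 2, yet AQ_{n,k} − S is not strongly Menger edge connected: it contains two distinct vertices u and v that are not joined by min{deg_{AQ_{n,k}−S}(u), deg_{AQ_{n,k}−S}(v)} pairwise edge-disjoint paths in AQ_{n,k} − S. -/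
open SimpleGraph

/-- The augmented `k`-ary `n`-cube.  Vertices are `n`-tuples over `ZMod k`;
the `Fin n` index `j` corresponds to the coordinate `a_{j+1}` of the paper. -/
def AQ (n k : ℕ) : SimpleGraph (Fin n → ZMod k) where
  Adj u v := u ≠ v ∧
    ((∃ i : Fin n, (v i = u i + 1 ∨ v i = u i - 1) ∧ ∀ j, j ≠ i → v j = u j) ∨
     (∃ i : Fin n, 1 ≤ i.val ∧
       ((∀ j, j ≤ i → v j = u j + 1) ∨ (∀ j, j ≤ i → v j = u j - 1)) ∧
       (∀ j, i < j → v j = u j)))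
  symm := by
    constructor
    rintro u v ⟨hne, h⟩
    refine ⟨hne.symm, ?_⟩
    rcases h with ⟨i, hi, hj⟩ | ⟨i, hi1, hpm, hj⟩
    · left
      refine ⟨i, ?_, fun j hj' => (hj j hj').symm⟩
      rcases hi with h | h
      · right; rw [h]; ring
      · left; rw [h]; ring
    · right
      refine ⟨i, hi1, ?_, fun j hj' => (hj j hj').symm⟩
      rcases hpm with h | h
      · right; intro j hj'; rw [h j hj']; ring
      · left; intro j hj'; rw [h j hj']; ring
  loopless := ⟨fun u h => h.1 rfl⟩

/-- Degree of a vertex, as the cardinality of its neighbour set. -/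
noncomputable def deg {V : Type*} (G : SimpleGraph V) (x : V) : ℕ :=
  (G.neighborSet x).ncard

/-- `G` is strongly Menger connected: any two distinct vertices `x, y` are joined by
`min (deg x) (deg y)` pairwise distinct, pairwise internally vertex-disjoint paths. -/
def StronglyMengerConnected {V : Type*} (G : SimpleGraph V) : Prop :=
  ∀ x y : V, x ≠ y →
    ∃ P : Fin (min (deg G x) (deg G y)) → G.Walk x y,
      (∀ i, (P i).IsPath) ∧
      (∀ i j, i ≠ j → P i ≠ P j) ∧
      (∀ i j, i ≠ j → ∀ w, w ∈ (P i).support → w ∈ (P j).support → w = x ∨ w = y)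

/-- `G` is strongly Menger edge connected: any two distinct vertices `x, y` are joined
by `min (deg x) (deg y)` pairwise edge-disjoint paths. -/
def StronglyMengerEdgeConnected {V : Type*} (G : SimpleGraph V) : Prop :=
  ∀ x y : V, x ≠ y →
    ∃ P : Fin (min (deg G x) (deg G y)) → G.Walk x y,
      (∀ i, (P i).IsPath) ∧
      (∀ i j, i ≠ j → ∀ e, e ∈ (P i).edges → e ∉ (P j).edges)

section AQAux

variable {n k : ℕ}

private lemma zmod_facts (hk : 3 ≤ k) :
    (1 : ZMod k) ≠ 0 ∧ (1 : ZMod k) ≠ -1 ∧ (2 : ZMod k) ≠ 0 ∧ (2 : ZMod k) ≠ 1 := by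
  have h1 : ((1 : ℕ) : ZMod k) ≠ 0 := by
    intro h
    rw [ZMod.natCast_eq_zero_iff] at h
    have := Nat.le_of_dvd one_pos h; omega
  have h2 : ((2 : ℕ) : ZMod k) ≠ 0 := by
    intro h
    rw [ZMod.natCast_eq_zero_iff] at h
    have := Nat.le_of_dvd two_pos h; omega
  push_cast at h1 h2
  refine ⟨h1, ?_, h2, ?_⟩
  · intro h; apply h2; linear_combination h
  · intro h; apply h1; linear_combination h

private def ee (i : Fin n) (ε : Bool) : Fin n → ZMod k :=
  fun j => if j = i then (if ε then 1 else -1) else 0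

private def dd (i : Fin n) (ε : Bool) : Fin n → ZMod k :=
  fun j => if j ≤ i then (if ε then 1 else -1) else 0

private def hh (a : (Fin n × Bool) ⊕ (Fin (n - 1) × Bool)) : Fin n → ZMod k :=
  match a with
  | .inl (i, ε) => ee i ε
  | .inr (p, ε) => dd ⟨p.val + 1, by have := p.isLt; omega⟩ ε

private lemma ee_self (i : Fin n) (ε : Bool) : ee (k := k) i ε i = (if ε then 1 else -1) := by
  simp [ee]

private lemma ee_ne {i j : Fin n} (ε : Bool) (h : j ≠ i) : ee (k := k) i ε j = 0 := by
  simp [ee, h]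

private lemma dd_le {i j : Fin n} (ε : Bool) (h : j ≤ i) : dd (k := k) i ε j = (if ε then 1 else -1) := by
  simp [dd, h]

private lemma dd_gt {i j : Fin n} (ε : Bool) (h : i < j) : dd (k := k) i ε j = 0 := by
  simp [dd, not_le.2 h]

private lemma signv_ne_zero (hk : 3 ≤ k) (ε : Bool) : (if ε then (1 : ZMod k) else -1) ≠ 0 := by
  obtain ⟨h10, h1n1, h20, h21⟩ := zmod_facts (k := k) hk
  cases ε <;> simp [h10, neg_eq_zero]

private lemma signv_inj (hk : 3 ≤ k) {ε δ : Bool}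
    (h : (if ε then (1 : ZMod k) else -1) = (if δ then 1 else -1)) : ε = δ := by
  obtain ⟨h10, h1n1, h20, h21⟩ := zmod_facts (k := k) hk
  cases ε <;> cases δ
  · rfl
  · exact absurd h.symm h1n1
  · exact absurd h h1n1
  · rfl

private lemma hh_injective (hk : 3 ≤ k) :
    Function.Injective (hh : _ → Fin n → ZMod k) := by
  rintro (⟨i, ε⟩ | ⟨p, ε⟩) (⟨j, δ⟩ | ⟨q, δ⟩) h
  · simp only [hh] at h
    by_cases hij : i = j
    · subst hij
      have hi := congrFun h i
      rw [ee_self, ee_self] at hi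
      rw [signv_inj hk hi]
    · exfalso
      have hi := congrFun h i
      rw [ee_self, ee_ne δ (fun hc => hij hc)] at hi
      exact signv_ne_zero hk ε hi
  · exfalso
    obtain ⟨q1, hq1⟩ : ∃ z : Fin n, z.val = q.val + 1 := ⟨⟨q.val + 1, by have := q.isLt; omega⟩, rfl⟩
    obtain ⟨z0, hz0⟩ : ∃ z : Fin n, z.val = 0 := ⟨⟨0, by have := q.isLt; omega⟩, rfl⟩
    have hE : ∀ jj : Fin n, jj ≠ i → hh (k := k) (Sum.inl (i, ε)) jj = 0 := fun jj hjj => ee_ne ε hjj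
    have hdq : ∀ jj : Fin n, jj = q1 ∨ jj = z0 → hh (k := k) (Sum.inr (q, δ)) jj = (if δ then 1 else -1) := by
      intro jj hjj
      apply dd_le
      simp only [Fin.le_def]
      rcases hjj with rfl | rfl <;> omega
    by_cases hi0 : z0 = i
    · have h1 := congrFun h q1
      rw [hdq q1 (Or.inl rfl), hE q1 (by rw [← hi0]; intro hc; rw [hc] at hq1; omega)] at h1
      exact signv_ne_zero hk δ h1.symm
    · have h0 := congrFun h z0
      rw [hdq z0 (Or.inr rfl), hE z0 hi0] at h0
      exact signv_ne_zero hk δ h0.symm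
  · exfalso
    obtain ⟨p1, hp1⟩ : ∃ z : Fin n, z.val = p.val + 1 := ⟨⟨p.val + 1, by have := p.isLt; omega⟩, rfl⟩
    obtain ⟨z0, hz0⟩ : ∃ z : Fin n, z.val = 0 := ⟨⟨0, by have := p.isLt; omega⟩, rfl⟩
    have hE : ∀ jj : Fin n, jj ≠ j → hh (k := k) (Sum.inl (j, δ)) jj = 0 := fun jj hjj => ee_ne δ hjj
    have hdp : ∀ jj : Fin n, jj = p1 ∨ jj = z0 → hh (k := k) (Sum.inr (p, ε)) jj = (if ε then 1 else -1) := by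
      intro jj hjj
      apply dd_le
      simp only [Fin.le_def]
      rcases hjj with rfl | rfl <;> omega
    by_cases hi0 : z0 = j
    · have h1 := congrFun h p1
      rw [hdp p1 (Or.inl rfl), hE p1 (by rw [← hi0]; intro hc; rw [hc] at hp1; omega)] at h1
      exact signv_ne_zero hk ε h1
    · have h0 := congrFun h z0
      rw [hdp z0 (Or.inr rfl), hE z0 hi0] at h0
      exact signv_ne_zero hk ε h0
  · obtain ⟨p1, hp1⟩ : ∃ z : Fin n, z.val = p.val + 1 := ⟨⟨p.val + 1, by have := p.isLt; omega⟩, rfl⟩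
    obtain ⟨q1, hq1⟩ : ∃ z : Fin n, z.val = q.val + 1 := ⟨⟨q.val + 1, by have := q.isLt; omega⟩, rfl⟩
    obtain ⟨z0, hz0⟩ : ∃ z : Fin n, z.val = 0 := ⟨⟨0, by have := p.isLt; omega⟩, rfl⟩
    have hP : ∀ jj : Fin n, jj.val ≤ p.val + 1 → hh (k := k) (Sum.inr (p, ε)) jj = (if ε then 1 else -1) := by
      intro jj hjj; apply dd_le; simp only [Fin.le_def]; omega
    have hQ : ∀ jj : Fin n, jj.val ≤ q.val + 1 → hh (k := k) (Sum.inr (q, δ)) jj = (if δ then 1 else -1) := by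
      intro jj hjj; apply dd_le; simp only [Fin.le_def]; omega
    have hPg : ∀ jj : Fin n, p.val + 1 < jj.val → hh (k := k) (Sum.inr (p, ε)) jj = 0 := by
      intro jj hjj; apply dd_gt; simp only [Fin.lt_def]; omega
    have hQg : ∀ jj : Fin n, q.val + 1 < jj.val → hh (k := k) (Sum.inr (q, δ)) jj = 0 := by
      intro jj hjj; apply dd_gt; simp only [Fin.lt_def]; omega
    have h0 := congrFun h z0
    rw [hP z0 (by omega), hQ z0 (by omega)] at h0
    have hεδ := signv_inj hk h0
    subst hεδ
    have hpq : p = q := by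
      by_contra hpq
      have hne : p.val ≠ q.val := fun hv => hpq (Fin.ext hv)
      rcases Nat.lt_or_ge p.val q.val with hlt | hge
      · have h1 := congrFun h q1
        rw [hPg q1 (by omega), hQ q1 (by omega)] at h1
        exact signv_ne_zero hk ε h1.symm
      · have h1 := congrFun h p1
        rw [hP p1 (by omega), hQg p1 (by omega)] at h1
        exact signv_ne_zero hk ε h1
    rw [hpq]

private lemma adj_shift {u v : Fin n → ZMod k} (c : Fin n → ZMod k) (h : (AQ n k).Adj u v) :
    (AQ n k).Adj (u + c) (v + c) := by
  obtain ⟨hne, h⟩ := h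
  refine ⟨fun hc => hne (by funext j; have := congrFun hc j; simpa using this), ?_⟩
  rcases h with ⟨i, hpm, hrest⟩ | ⟨i, h1, hpm, hrest⟩
  · left
    refine ⟨i, ?_, fun j hj => by simp [hrest j hj]⟩
    rcases hpm with h | h
    · left; show v i + c i = u i + c i + 1; rw [h]; ring
    · right; show v i + c i = u i + c i - 1; rw [h]; ring
  · right
    refine ⟨i, h1, ?_, fun j hj => by simp [hrest j hj]⟩
    rcases hpm with h | h
    · left; intro j hj; show v j + c j = u j + c j + 1; rw [h j hj]; ring
    · right; intro j hj; show v j + c j = u j + c j - 1; rw [h j hj]; ring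

private lemma adj_zero_iff (hk : 3 ≤ k) {v : Fin n → ZMod k} :
    (AQ n k).Adj 0 v ↔ ∃ a, hh a = v := by
  constructor
  · rintro ⟨hne, ⟨i, hpm, hrest⟩ | ⟨i, h1, hpm, hrest⟩⟩
    · rcases hpm with hp | hp
      · refine ⟨Sum.inl (i, true), funext fun j => ?_⟩
        by_cases hj : j = i
        · subst hj; rw [show hh (Sum.inl (j, true)) j = _ from ee_self j true]; simp [hp]
        · rw [show hh (Sum.inl (i, true)) j = _ from ee_ne true hj, hrest j hj]; simp
      · refine ⟨Sum.inl (i, false), funext fun j => ?_⟩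
        by_cases hj : j = i
        · subst hj; rw [show hh (Sum.inl (j, false)) j = _ from ee_self j false]; simp [hp]
        · rw [show hh (Sum.inl (i, false)) j = _ from ee_ne false hj, hrest j hj]; simp
    · obtain ⟨p, hp⟩ : ∃ p : Fin (n - 1), p.val = i.val - 1 :=
        ⟨⟨i.val - 1, by have := i.isLt; omega⟩, rfl⟩
      have hidx : (⟨p.val + 1, by have := p.isLt; omega⟩ : Fin n) = i :=
        Fin.ext (by show p.val + 1 = i.val; omega)
      rcases hpm with hq | hq
      · refine ⟨Sum.inr (p, true), funext fun j => ?_⟩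
        show dd ⟨p.val + 1, _⟩ true j = v j
        rw [hidx]
        by_cases hj : j ≤ i
        · rw [dd_le true hj, hq j hj]; simp
        · rw [dd_gt true (not_le.1 hj), hrest j (not_le.1 hj)]; simp
      · refine ⟨Sum.inr (p, false), funext fun j => ?_⟩
        show dd ⟨p.val + 1, _⟩ false j = v j
        rw [hidx]
        by_cases hj : j ≤ i
        · rw [dd_le false hj, hq j hj]; simp
        · rw [dd_gt false (not_le.1 hj), hrest j (not_le.1 hj)]; simp
  · rintro ⟨a, rfl⟩
    match a with
    | Sum.inl (i, ε) =>
      have hself : hh (k := k) (Sum.inl (i, ε)) i = (if ε then 1 else -1) := ee_self i ε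
      have hne' : ∀ j, j ≠ i → hh (k := k) (Sum.inl (i, ε)) j = 0 := fun j hj => ee_ne ε hj
      refine ⟨fun hc => ?_, Or.inl ⟨i, ?_, fun j hj => by rw [hne' j hj]; rfl⟩⟩
      · have h0 := (congrFun hc i).symm
        rw [hself] at h0
        exact signv_ne_zero hk ε (h0.trans rfl)
      · cases ε
        · right; rw [show hh (k := k) (Sum.inl (i, false)) i = _ from hself]; simp
        · left; rw [show hh (k := k) (Sum.inl (i, true)) i = _ from hself]; simp
    | Sum.inr (p, ε) =>
      set q1 : Fin n := ⟨p.val + 1, by have := p.isLt; omega⟩ with hq1def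
      have hL : ∀ jj : Fin n, jj ≤ q1 → hh (k := k) (Sum.inr (p, ε)) jj = (if ε then 1 else -1) :=
        fun jj hjj => dd_le ε hjj
      have hG : ∀ jj : Fin n, q1 < jj → hh (k := k) (Sum.inr (p, ε)) jj = 0 :=
        fun jj hjj => dd_gt ε hjj
      refine ⟨fun hc => ?_, Or.inr ⟨q1, by show 1 ≤ p.val + 1; omega, ?_,
        fun j hj => by rw [hG j hj]; rfl⟩⟩
      · have h0 := (congrFun hc q1).symm
        rw [hL q1 le_rfl] at h0
        exact signv_ne_zero hk ε (h0.trans rfl)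
      · cases ε
        · right; intro j hj; rw [hL j hj]; simp
        · left; intro j hj; rw [hL j hj]; simp

private lemma adj_iff (hk : 3 ≤ k) {t v : Fin n → ZMod k} :
    (AQ n k).Adj t v ↔ ∃ a, t + hh a = v := by
  constructor
  · intro h
    have h0 : (AQ n k).Adj 0 (v - t) := by
      have := adj_shift (-t) h
      have he1 : t + -t = 0 := by funext j; simp
      have he2 : v + -t = v - t := by funext j; simp [sub_eq_add_neg]
      rwa [he1, he2] at this
    obtain ⟨a, ha⟩ := (adj_zero_iff hk).1 h0
    exact ⟨a, by rw [ha]; abel⟩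
  · rintro ⟨a, rfl⟩
    have h0 : (AQ n k).Adj 0 (hh a) := (adj_zero_iff hk).2 ⟨a, rfl⟩
    have := adj_shift t h0
    have he1 : (0 : Fin n → ZMod k) + t = t := by funext j; simp
    have he2 : hh (k := k) a + t = t + hh a := by funext j; simp [add_comm]
    rwa [he1, he2] at this

private lemma neighborSet_eq (hk : 3 ≤ k) (t : Fin n → ZMod k) :
    (AQ n k).neighborSet t = Set.range (fun a => t + hh a) := by
  ext v
  simp only [SimpleGraph.mem_neighborSet, Set.mem_range]
  exact adj_iff hk

private lemma deg_AQ (hn : 1 ≤ n) (hk : 3 ≤ k) (t : Fin n → ZMod k) :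
    deg (AQ n k) t = 4 * n - 2 := by
  haveI : NeZero k := ⟨by omega⟩
  rw [deg, neighborSet_eq hk]
  have hinj : Function.Injective (fun a => t + hh (n := n) (k := k) a) := by
    intro a b hab
    apply hh_injective hk
    have := congrFun hab
    funext j
    have := congrFun hab j
    simpa using this
  rw [← Nat.card_coe_set_eq, Nat.card_range_of_injective hinj]
  simp only [Nat.card_eq_fintype_card, Fintype.card_sum, Fintype.card_prod, Fintype.card_fin,
    Fintype.card_bool]
  omega

private lemma walk_cross {V : Type*} {G : SimpleGraph V} (A : Set V) {a b : V}
    (p : G.Walk a b) : a ∈ A → b ∉ A →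
    ∃ c d, G.Adj c d ∧ c ∈ A ∧ d ∉ A ∧ s(c, d) ∈ p.edges := by
  induction p with
  | nil => intro ha hb; exact absurd ha hb
  | @cons u v w h q ih =>
    intro ha hb
    by_cases hv : v ∈ A
    · obtain ⟨c, d, h1, h2, h3, h4⟩ := ih hv hb
      exact ⟨c, d, h1, h2, h3, by rw [SimpleGraph.Walk.edges_cons]; exact List.mem_cons_of_mem _ h4⟩
    · exact ⟨u, v, h, ha, hv, by rw [SimpleGraph.Walk.edges_cons]; exact List.mem_cons_self⟩

private lemma hh_inl_val (i : Fin n) (ε : Bool) (j : Fin n) :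
    hh (k := k) (Sum.inl (i, ε)) j = if j = i then (if ε then 1 else -1) else 0 := rfl

private lemma hh_inr_val (p : Fin (n - 1)) (ε : Bool) (j : Fin n) :
    hh (k := k) (Sum.inr (p, ε)) j = if j.val ≤ p.val + 1 then (if ε then 1 else -1) else 0 := by
  by_cases hj : j.val ≤ p.val + 1
  · rw [if_pos hj]
    exact dd_le ε (by rw [Fin.le_def]; exact hj)
  · rw [if_neg hj]
    exact dd_gt ε (by rw [Fin.lt_def]; show p.val + 1 < j.val; omega)

end AQAux

/-- For all integers `n ≥ 3` and `k ≥ 3`, `AQ_{n,k}` is not `(8n-9)`-conditional strongly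
Menger edge connected. -/
theorem AQ_not_conditional_strongly_menger_edge_connected (n k : ℕ) (hn : 3 ≤ n) (hk : 3 ≤ k) :
    ∃ S : Set (Sym2 (Fin n → ZMod k)), S ⊆ (AQ n k).edgeSet ∧ S.ncard ≤ 8 * n - 9 ∧
      (∀ v, 2 ≤ deg ((AQ n k).deleteEdges S) v) ∧
      ¬ StronglyMengerEdgeConnected ((AQ n k).deleteEdges S) := by
  classical
  haveI : NeZero k := ⟨by omega⟩
  obtain ⟨h10, h1n1, h20, h21⟩ := zmod_facts (k := k) hk
  set G := AQ n k with hGdef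
  obtain ⟨i0, hi0v⟩ : ∃ i : Fin n, i.val = 0 := ⟨⟨0, by omega⟩, rfl⟩
  obtain ⟨i1, hi1v⟩ : ∃ i : Fin n, i.val = 1 := ⟨⟨1, by omega⟩, rfl⟩
  obtain ⟨i2, hi2v⟩ : ∃ i : Fin n, i.val = 2 := ⟨⟨2, by omega⟩, rfl⟩
  obtain ⟨p0, hp0v⟩ : ∃ p : Fin (n - 1), p.val = 0 := ⟨⟨0, by omega⟩, rfl⟩
  obtain ⟨p1, hp1v⟩ : ∃ p : Fin (n - 1), p.val = 1 := ⟨⟨1, by omega⟩, rfl⟩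
  set x : Fin n → ZMod k := 0 with hxdef
  set u : Fin n → ZMod k := hh (Sum.inl (i0, true)) with hudef
  set w : Fin n → ZMod k := hh (Sum.inr (p0, true)) with hwdef
  set z : Fin n → ZMod k := hh (Sum.inr (p1, true)) with hzdef
  set y : Fin n → ZMod k := fun _ => 2 with hydef
  -- value lemmas
  have hxval : ∀ j : Fin n, x j = 0 := fun j => rfl
  have huval : ∀ j : Fin n, u j = if j.val = 0 then 1 else 0 := by
    intro j
    rw [hudef, hh_inl_val]
    by_cases hj : j.val = 0
    · rw [if_pos (Fin.ext (by rw [hj, hi0v])), if_pos hj]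
      rfl
    · rw [if_neg (fun hc => hj (by rw [hc, hi0v])), if_neg hj]
  have hwval : ∀ j : Fin n, w j = if j.val ≤ 1 then 1 else 0 := by
    intro j
    rw [hwdef, hh_inr_val, hp0v]
    norm_num
  have hzval : ∀ j : Fin n, z j = if j.val ≤ 2 then 1 else 0 := by
    intro j
    rw [hzdef, hh_inr_val, hp1v]
    norm_num
  have hyval : ∀ j : Fin n, y j = 2 := fun j => rfl
  -- distinctness
  have hval_ne : ∀ {a b : Fin n → ZMod k}, (∃ j, a j ≠ b j) → a ≠ b := by
    rintro a b ⟨j, hj⟩ hc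
    exact hj (by rw [hc])
  have hxu : x ≠ u := hval_ne ⟨i0, by
    rw [hxval, huval, if_pos hi0v]; exact fun hc => h10 hc.symm⟩
  have hxw : x ≠ w := hval_ne ⟨i0, by
    rw [hxval, hwval, if_pos (show i0.val ≤ 1 by omega)]; exact fun hc => h10 hc.symm⟩
  have hxz : x ≠ z := hval_ne ⟨i0, by
    rw [hxval, hzval, if_pos (show i0.val ≤ 2 by omega)]; exact fun hc => h10 hc.symm⟩
  have huw : u ≠ w := hval_ne ⟨i1, by
    rw [huval, hwval, if_neg (show ¬ i1.val = 0 by omega),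
      if_pos (show i1.val ≤ 1 by omega)]; exact fun hc => h10 hc.symm⟩
  have huz : u ≠ z := hval_ne ⟨i1, by
    rw [huval, hzval, if_neg (show ¬ i1.val = 0 by omega),
      if_pos (show i1.val ≤ 2 by omega)]; exact fun hc => h10 hc.symm⟩
  have hwz : w ≠ z := hval_ne ⟨i2, by
    rw [hwval, hzval, if_neg (show ¬ i2.val ≤ 1 by omega),
      if_pos (show i2.val ≤ 2 by omega)]; exact fun hc => h10 hc.symm⟩
  have hyx : y ≠ x := hval_ne ⟨i0, show (2 : ZMod k) ≠ 0 from h20⟩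
  have hyu : y ≠ u := hval_ne ⟨i2, by
    rw [huval i2, if_neg (show ¬ i2.val = 0 by omega)]; exact h20⟩
  have hyw : y ≠ w := hval_ne ⟨i2, by
    rw [hwval i2, if_neg (show ¬ i2.val ≤ 1 by omega)]; exact h20⟩
  -- adjacencies
  have hadj_xu : G.Adj x u := (adj_iff hk).2 ⟨Sum.inl (i0, true), by rw [hxdef, hudef, zero_add]⟩
  have hadj_xw : G.Adj x w := (adj_iff hk).2 ⟨Sum.inr (p0, true), by rw [hxdef, hwdef, zero_add]⟩
  have hadj_uw : G.Adj u w := by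
    refine (adj_iff hk).2 ⟨Sum.inl (i1, true), funext fun j => ?_⟩
    rw [Pi.add_apply, huval j, hh_inl_val, hwval j]
    by_cases h0 : j.val = 0
    · rw [if_pos h0, if_neg (fun hc : j = i1 => by rw [hc, hi1v] at h0; exact absurd h0 (by omega)),
        if_pos (show j.val ≤ 1 by omega)]
      simp
    · by_cases h1 : j.val = 1
      · rw [if_neg h0, if_pos (Fin.ext (by rw [h1, hi1v])), if_pos (show j.val ≤ 1 by omega)]
        simp
      · rw [if_neg h0, if_neg (fun hc : j = i1 => h1 (by rw [hc, hi1v])),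
          if_neg (show ¬ j.val ≤ 1 by omega)]
        simp
  have hadj_wz : G.Adj w z := by
    refine (adj_iff hk).2 ⟨Sum.inl (i2, true), funext fun j => ?_⟩
    rw [Pi.add_apply, hwval j, hh_inl_val, hzval j]
    by_cases h0 : j.val ≤ 1
    · rw [if_pos h0, if_neg (fun hc : j = i2 => by rw [hc, hi2v] at h0; exact absurd h0 (by omega)),
        if_pos (show j.val ≤ 2 by omega)]
      simp
    · by_cases h1 : j.val = 2
      · rw [if_neg h0, if_pos (Fin.ext (by rw [h1, hi2v])), if_pos (show j.val ≤ 2 by omega)]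
        simp
      · rw [if_neg h0, if_neg (fun hc : j = i2 => h1 (by rw [hc, hi2v])),
          if_neg (show ¬ j.val ≤ 2 by omega)]
        simp
  -- non-adjacencies of y
  have hnadj_yu : ¬ G.Adj y u := by
    intro hadj
    obtain ⟨a, ha⟩ := (adj_iff hk).1 hadj
    have hval : ∀ j : Fin n, hh (k := k) a j = u j - 2 := by
      intro j
      have := congrFun ha j
      rw [Pi.add_apply, hyval j] at this
      linear_combination this
    match a with
    | Sum.inl (i, ε) =>
      rcases (show i0 ≠ i ∨ i1 ≠ i from by
        by_cases hc : i0 = i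
        · right; rw [← hc]; intro hc2
          have h' := congrArg Fin.val hc2; rw [hi1v, hi0v] at h'; omega
        · left; exact hc) with hi | hi
      · have h0 := hval i0
        rw [hh_inl_val, if_neg hi, huval] at h0
        rw [if_pos hi0v] at h0
        exact h10 (by linear_combination h0)
      · have h1 := hval i1
        rw [hh_inl_val, if_neg hi, huval] at h1
        rw [if_neg (show ¬ i1.val = 0 by omega)] at h1
        exact h20 (by linear_combination h1)
    | Sum.inr (p, ε) =>
      have h0 := hval i0
      have h1 := hval i1
      rw [hh_inr_val, if_pos (show i0.val ≤ p.val + 1 by omega), huval] at h0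
      rw [hh_inr_val, if_pos (show i1.val ≤ p.val + 1 by omega), huval] at h1
      rw [if_pos hi0v] at h0
      rw [if_neg (show ¬ i1.val = 0 by omega)] at h1
      cases ε
      · rw [if_neg Bool.false_ne_true] at h1
        exact h10 (by linear_combination h1)
      · rw [if_pos rfl] at h0
        exact h20 (by linear_combination h0)
  have hnadj_yw : ¬ G.Adj y w := by
    intro hadj
    obtain ⟨a, ha⟩ := (adj_iff hk).1 hadj
    have hval : ∀ j : Fin n, hh (k := k) a j = w j - 2 := by
      intro j
      have := congrFun ha j
      rw [Pi.add_apply, hyval j] at this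
      linear_combination this
    match a with
    | Sum.inl (i, ε) =>
      rcases (show i0 ≠ i ∨ i1 ≠ i from by
        by_cases hc : i0 = i
        · right; rw [← hc]; intro hc2
          have h' := congrArg Fin.val hc2; rw [hi1v, hi0v] at h'; omega
        · left; exact hc) with hi | hi
      · have h0 := hval i0
        rw [hh_inl_val, if_neg hi, hwval] at h0
        rw [if_pos (show i0.val ≤ 1 by omega)] at h0
        exact h10 (by linear_combination h0)
      · have h1 := hval i1
        rw [hh_inl_val, if_neg hi, hwval] at h1
        rw [if_pos (show i1.val ≤ 1 by omega)] at h1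
        exact h10 (by linear_combination h1)
    | Sum.inr (p, ε) =>
      have h0 := hval i0
      have h2 := hval i2
      rw [hh_inr_val, if_pos (show i0.val ≤ p.val + 1 by omega), hwval] at h0
      rw [hh_inr_val, hwval] at h2
      rw [if_pos (show i0.val ≤ 1 by omega)] at h0
      rw [if_neg (show ¬ i2.val ≤ 1 by omega)] at h2
      cases ε
      · by_cases hc : i2.val ≤ p.val + 1
        · rw [if_pos hc, if_neg Bool.false_ne_true] at h2
          exact h10 (by linear_combination h2)
        · rw [if_neg hc] at h2
          exact h20 (by linear_combination h2)
      · rw [if_pos rfl] at h0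
        exact h20 (by linear_combination h0)
  -- the deleted edge set
  set K : Set (Sym2 (Fin n → ZMod k)) := {s(x, u), s(x, w), s(u, w), s(w, z)} with hKdef
  set S : Set (Sym2 (Fin n → ZMod k)) :=
    {e | e ∈ G.edgeSet ∧ (u ∈ e ∨ w ∈ e) ∧ e ∉ K} with hSdef
  have hmemS : ∀ e, e ∈ S ↔ e ∈ G.edgeSet ∧ (u ∈ e ∨ w ∈ e) ∧ e ∉ K := fun e => Iff.rfl
  have hmemK : ∀ e, e ∈ K ↔ e = s(x, u) ∨ e = s(x, w) ∨ e = s(u, w) ∨ e = s(w, z) := by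
    intro e
    simp [hKdef, Set.mem_insert_iff, Set.mem_singleton_iff]
  set G' := G.deleteEdges S with hG'def
  have hkeep : ∀ a b, G.Adj a b → s(a, b) ∈ K → G'.Adj a b := by
    intro a b hadj hK
    rw [hG'def, SimpleGraph.deleteEdges_adj]
    exact ⟨hadj, fun hS => hS.2.2 hK⟩
  -- x and y keep all their neighbours
  have hNx : G'.neighborSet x = G.neighborSet x := by
    ext b
    simp only [SimpleGraph.mem_neighborSet, hG'def, SimpleGraph.deleteEdges_adj]
    refine ⟨fun h => h.1, fun h => ⟨h, fun hS => ?_⟩⟩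
    obtain ⟨hE, hmem, hKn⟩ := hS
    rcases hmem with hm | hm
    · rcases Sym2.mem_iff.1 hm with hm' | hm'
      · exact hxu hm'.symm
      · exact hKn ((hmemK _).2 (Or.inl (by rw [← hm'])))
    · rcases Sym2.mem_iff.1 hm with hm' | hm'
      · exact hxw hm'.symm
      · exact hKn ((hmemK _).2 (Or.inr (Or.inl (by rw [← hm']))))
  have hNy : G'.neighborSet y = G.neighborSet y := by
    ext b
    simp only [SimpleGraph.mem_neighborSet, hG'def, SimpleGraph.deleteEdges_adj]
    refine ⟨fun h => h.1, fun h => ⟨h, fun hS => ?_⟩⟩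
    obtain ⟨hE, hmem, hKn⟩ := hS
    rcases hmem with hm | hm
    · rcases Sym2.mem_iff.1 hm with hm' | hm'
      · exact hyu hm'.symm
      · exact hnadj_yu (by rw [← hm'] at hE; exact (SimpleGraph.mem_edgeSet _).1 hE)
    · rcases Sym2.mem_iff.1 hm with hm' | hm'
      · exact hyw hm'.symm
      · exact hnadj_yw (by rw [← hm'] at hE; exact (SimpleGraph.mem_edgeSet _).1 hE)
  have hdegx : deg G' x = 4 * n - 2 := by
    rw [deg, hNx]; exact deg_AQ (by omega) hk x
  have hdegy : deg G' y = 4 * n - 2 := by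
    rw [deg, hNy]; exact deg_AQ (by omega) hk y
  -- minimum degree at least two
  have hi01 : i0 ≠ i1 := fun hc => by rw [hc] at hi0v; omega
  have hdeg2 : ∀ v, 2 ≤ deg G' v := by
    intro v
    show 2 ≤ (G'.neighborSet v).ncard
    by_cases hvu : v = u
    · rw [hvu]
      have hsub : ({x, w} : Set (Fin n → ZMod k)) ⊆ G'.neighborSet u := by
        intro b hb
        rcases Set.mem_insert_iff.1 hb with rfl | hb
        · exact hkeep u x hadj_xu.symm ((hmemK _).2 (Or.inl Sym2.eq_swap))
        · rw [Set.mem_singleton_iff.1 hb]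
          exact hkeep u w hadj_uw ((hmemK _).2 (Or.inr (Or.inr (Or.inl rfl))))
      calc 2 = ({x, w} : Set (Fin n → ZMod k)).ncard := (Set.ncard_pair hxw).symm
        _ ≤ (G'.neighborSet u).ncard := Set.ncard_le_ncard hsub (Set.toFinite _)
    · by_cases hvw : v = w
      · rw [hvw]
        have hsub : ({x, u} : Set (Fin n → ZMod k)) ⊆ G'.neighborSet w := by
          intro b hb
          rcases Set.mem_insert_iff.1 hb with rfl | hb
          · exact hkeep w x hadj_xw.symm ((hmemK _).2 (Or.inr (Or.inl Sym2.eq_swap)))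
          · rw [Set.mem_singleton_iff.1 hb]
            exact hkeep w u hadj_uw.symm ((hmemK _).2 (Or.inr (Or.inr (Or.inl Sym2.eq_swap))))
        calc 2 = ({x, u} : Set (Fin n → ZMod k)).ncard := (Set.ncard_pair hxu).symm
          _ ≤ (G'.neighborSet w).ncard := Set.ncard_le_ncard hsub (Set.toFinite _)
      · -- generic vertex
        have hvadj : ∀ a, G.Adj v (v + hh (k := k) a) := fun a => (adj_iff hk).2 ⟨a, rfl⟩
        have hinj : Function.Injective (fun a => v + hh (n := n) (k := k) a) := by
          intro a b hab
          exact hh_injective hk (add_left_cancel hab)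
        set Q : Set ((Fin n × Bool) ⊕ (Fin (n - 1) × Bool)) :=
          {Sum.inl (i0, true), Sum.inl (i0, false), Sum.inl (i1, true), Sum.inl (i1, false)}
          with hQdef
        set N : Set (Fin n → ZMod k) := (fun a => v + hh a) '' Q with hNdef
        have hNcard : N.ncard = 4 := by
          rw [hNdef, Set.ncard_image_of_injective _ hinj, hQdef]
          rw [Set.ncard_insert_of_notMem (by simp [hi01]) (Set.toFinite _),
            Set.ncard_insert_of_notMem (by simp [hi01]) (Set.toFinite _),
            Set.ncard_pair (by simp [hi01])]
        have hsub : N \ {u, w} ⊆ G'.neighborSet v := by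
          intro b hb
          obtain ⟨hbN, hbuw⟩ := hb
          simp only [Set.mem_insert_iff, Set.mem_singleton_iff] at hbuw
          push_neg at hbuw
          obtain ⟨b0, _, rfl⟩ := hbN
          rw [SimpleGraph.mem_neighborSet, hG'def, SimpleGraph.deleteEdges_adj]
          refine ⟨hvadj b0, fun hS => ?_⟩
          obtain ⟨hE, hmem, hKn⟩ := hS
          rcases hmem with hm | hm
          · rcases Sym2.mem_iff.1 hm with hm' | hm'
            · exact hvu hm'.symm
            · exact hbuw.1 hm'.symm
          · rcases Sym2.mem_iff.1 hm with hm' | hm'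
            · exact hvw hm'.symm
            · exact hbuw.2 hm'.symm
        have hdiff := Set.ncard_le_ncard_diff_add_ncard N {u, w} (Set.toFinite _)
        have huw2 : ({u, w} : Set (Fin n → ZMod k)).ncard = 2 := Set.ncard_pair huw
        have h2 : 2 ≤ (N \ ({u, w} : Set (Fin n → ZMod k))).ncard := by omega
        calc 2 ≤ (N \ ({u, w} : Set (Fin n → ZMod k))).ncard := h2
          _ ≤ (G'.neighborSet v).ncard := Set.ncard_le_ncard hsub (Set.toFinite _)
  -- cardinality of S
  have hSedge : S ⊆ G.edgeSet := fun e he => he.1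
  have hdegu : (G.neighborSet u).ncard = 4 * n - 2 := deg_AQ (by omega) hk u
  have hdegw : (G.neighborSet w).ncard = 4 * n - 2 := deg_AQ (by omega) hk w
  have hScard : S.ncard ≤ 8 * n - 9 := by
    have hsplit : S ⊆ ((fun b => s(u, b)) '' (G.neighborSet u \ {x, w})) ∪
        ((fun b => s(w, b)) '' (G.neighborSet w \ {x, u, z})) := by
      intro e he
      obtain ⟨hE, hmem, hKn⟩ := he
      by_cases hue : u ∈ e
      · left
        obtain ⟨b, rfl⟩ := Sym2.mem_iff_exists.1 hue
        refine ⟨b, ⟨(SimpleGraph.mem_edgeSet _).1 hE, ?_⟩, rfl⟩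
        simp only [Set.mem_insert_iff, Set.mem_singleton_iff]
        push_neg
        constructor
        · rintro rfl
          exact hKn ((hmemK _).2 (Or.inl Sym2.eq_swap))
        · rintro rfl
          exact hKn ((hmemK _).2 (Or.inr (Or.inr (Or.inl rfl))))
      · right
        have hwe : w ∈ e := hmem.resolve_left hue
        obtain ⟨b, rfl⟩ := Sym2.mem_iff_exists.1 hwe
        refine ⟨b, ⟨(SimpleGraph.mem_edgeSet _).1 hE, ?_⟩, rfl⟩
        simp only [Set.mem_insert_iff, Set.mem_singleton_iff]
        push_neg
        refine ⟨?_, ?_, ?_⟩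
        · rintro rfl
          exact hKn ((hmemK _).2 (Or.inr (Or.inl Sym2.eq_swap)))
        · rintro rfl
          exact hKn ((hmemK _).2 (Or.inr (Or.inr (Or.inl Sym2.eq_swap))))
        · rintro rfl
          exact hKn ((hmemK _).2 (Or.inr (Or.inr (Or.inr rfl))))
    have hsub1 : ({x, w} : Set (Fin n → ZMod k)) ⊆ G.neighborSet u := by
      intro b hb
      rcases Set.mem_insert_iff.1 hb with rfl | hb
      · exact hadj_xu.symm
      · rw [Set.mem_singleton_iff.1 hb]; exact hadj_uw
    have hsub2 : ({x, u, z} : Set (Fin n → ZMod k)) ⊆ G.neighborSet w := by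
      intro b hb
      rcases Set.mem_insert_iff.1 hb with rfl | hb
      · exact hadj_xw.symm
      · rcases Set.mem_insert_iff.1 hb with rfl | hb
        · exact hadj_uw.symm
        · rw [Set.mem_singleton_iff.1 hb]; exact hadj_wz
    have hd1 : (G.neighborSet u \ ({x, w} : Set (Fin n → ZMod k))).ncard = 4 * n - 2 - 2 := by
      rw [Set.ncard_diff hsub1 (Set.toFinite _), hdegu, Set.ncard_pair hxw]
    have hd2 : (G.neighborSet w \ ({x, u, z} : Set (Fin n → ZMod k))).ncard = 4 * n - 2 - 3 := by
      rw [Set.ncard_diff hsub2 (Set.toFinite _), hdegw]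
      rw [Set.ncard_insert_of_notMem (by simp [hxu, hxz]) (Set.toFinite _), Set.ncard_pair huz]
    calc S.ncard ≤ _ := Set.ncard_le_ncard hsplit (Set.toFinite _)
      _ ≤ ((fun b => s(u, b)) '' (G.neighborSet u \ {x, w})).ncard +
          ((fun b => s(w, b)) '' (G.neighborSet w \ {x, u, z})).ncard := Set.ncard_union_le _ _
      _ ≤ (G.neighborSet u \ ({x, w} : Set (Fin n → ZMod k))).ncard +
          (G.neighborSet w \ ({x, u, z} : Set (Fin n → ZMod k))).ncard :=
        add_le_add (Set.ncard_image_le (Set.toFinite _)) (Set.ncard_image_le (Set.toFinite _))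
      _ ≤ 8 * n - 9 := by rw [hd1, hd2]; omega
  -- the crossing edge set
  set A : Set (Fin n → ZMod k) := {x, u, w} with hAdef
  set C : Set (Sym2 (Fin n → ZMod k)) :=
    ((fun b => s(x, b)) '' (G.neighborSet x \ {u, w})) ∪ {s(w, z)} with hCdef
  have hdegx0 : (G.neighborSet x).ncard = 4 * n - 2 := deg_AQ (by omega) hk x
  have hCcard : C.ncard ≤ 4 * n - 3 := by
    have hsubx : ({u, w} : Set (Fin n → ZMod k)) ⊆ G.neighborSet x := by
      intro b hb
      rcases Set.mem_insert_iff.1 hb with rfl | hb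
      · exact hadj_xu
      · rw [Set.mem_singleton_iff.1 hb]; exact hadj_xw
    have hdx : (G.neighborSet x \ ({u, w} : Set (Fin n → ZMod k))).ncard = 4 * n - 2 - 2 := by
      rw [Set.ncard_diff hsubx (Set.toFinite _), hdegx0, Set.ncard_pair huw]
    calc C.ncard ≤ ((fun b => s(x, b)) '' (G.neighborSet x \ {u, w})).ncard +
          ({s(w, z)} : Set (Sym2 (Fin n → ZMod k))).ncard := Set.ncard_union_le _ _
      _ ≤ (G.neighborSet x \ ({u, w} : Set (Fin n → ZMod k))).ncard + 1 :=
        add_le_add (Set.ncard_image_le (Set.toFinite _)) (le_of_eq (Set.ncard_singleton _))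
      _ ≤ 4 * n - 3 := by rw [hdx]; omega
  have hcross : ∀ c d, G'.Adj c d → c ∈ A → d ∉ A → s(c, d) ∈ C := by
    intro c d hadj hcA hdA
    simp only [hAdef, Set.mem_insert_iff, Set.mem_singleton_iff] at hcA hdA
    push_neg at hdA
    obtain ⟨hdx, hdu, hdw⟩ := hdA
    rw [hG'def, SimpleGraph.deleteEdges_adj] at hadj
    obtain ⟨hGadj, hnS⟩ := hadj
    rcases hcA with rfl | rfl | rfl
    · exact Or.inl ⟨d, ⟨hGadj, by simp [hdu, hdw]⟩, rfl⟩
    · exfalso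
      have heK : s(u, d) ∈ K := by
        by_contra hK
        exact hnS ⟨(SimpleGraph.mem_edgeSet _).2 hGadj, Or.inl (Sym2.mem_mk_left _ _), hK⟩
      rcases (hmemK _).1 heK with he | he | he | he
      · rcases Sym2.eq_iff.1 he with ⟨h1, h2⟩ | ⟨h1, h2⟩
        · exact hxu h1.symm
        · exact hdx h2
      · rcases Sym2.eq_iff.1 he with ⟨h1, h2⟩ | ⟨h1, h2⟩
        · exact hxu h1.symm
        · exact huw h1
      · rcases Sym2.eq_iff.1 he with ⟨h1, h2⟩ | ⟨h1, h2⟩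
        · exact hdw h2
        · exact huw h1
      · rcases Sym2.eq_iff.1 he with ⟨h1, h2⟩ | ⟨h1, h2⟩
        · exact huw h1
        · exact huz h1
    · have heK : s(w, d) ∈ K := by
        by_contra hK
        exact hnS ⟨(SimpleGraph.mem_edgeSet _).2 hGadj, Or.inr (Sym2.mem_mk_left _ _), hK⟩
      rcases (hmemK _).1 heK with he | he | he | he
      · exfalso
        rcases Sym2.eq_iff.1 he with ⟨h1, h2⟩ | ⟨h1, h2⟩
        · exact hxw h1.symm
        · exact huw h1.symm
      · exfalso
        rcases Sym2.eq_iff.1 he with ⟨h1, h2⟩ | ⟨h1, h2⟩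
        · exact hxw h1.symm
        · exact hdx h2
      · exfalso
        rcases Sym2.eq_iff.1 he with ⟨h1, h2⟩ | ⟨h1, h2⟩
        · exact huw h1.symm
        · exact hdu h2
      · rcases Sym2.eq_iff.1 he with ⟨h1, h2⟩ | ⟨h1, h2⟩
        · exact Or.inr (by rw [h2]; exact Set.mem_singleton _)
        · exact absurd h1 hwz
  -- conclusion
  refine ⟨S, hSedge, hScard, hdeg2, ?_⟩
  intro hSM
  obtain ⟨P, hpath, hdisj⟩ := hSM x y (fun hc => hyx hc.symm)
  have hxA : x ∈ A := by rw [hAdef]; exact Set.mem_insert _ _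
  have hyA : y ∉ A := by
    simp only [hAdef, Set.mem_insert_iff, Set.mem_singleton_iff]
    push_neg
    exact ⟨hyx, hyu, hyw⟩
  have key : ∀ i, ∃ e, e ∈ (P i).edges ∧ e ∈ C := by
    intro i
    obtain ⟨c, d, hcd, hcA, hdA, he⟩ := walk_cross A (P i) hxA hyA
    exact ⟨s(c, d), he, hcross c d hcd hcA hdA⟩
  choose F hF1 hF2 using key
  have hFinj : Function.Injective F := by
    intro i j hij
    by_contra hne
    exact hdisj i j hne (F i) (hF1 i) (by rw [hij]; exact hF1 j)
  have hle : min (deg G' x) (deg G' y) ≤ C.ncard := by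
    have hinj2 : Function.Injective (fun i : Fin (min (deg G' x) (deg G' y)) =>
        (⟨F i, hF2 i⟩ : C)) := fun i j hij => hFinj (congrArg Subtype.val hij)
    calc min (deg G' x) (deg G' y)
        = Nat.card (Fin (min (deg G' x) (deg G' y))) := by simp
      _ ≤ Nat.card C := Nat.card_le_card_of_injective _ hinj2
      _ = C.ncard := Nat.card_coe_set_eq C
  rw [hdegx, hdegy, min_self] at hle
  omega
end

section
/- Let n ≥ 2 and k ≥ 3 be integers, let i ∈ Z_k, and let U be a set of vertices of the augmented k-ary n-cube AQ_{n,k} each of whose n-th coordinate equals i. Then the set of vertices of AQ_{n,k} whose n-th coordinate is different from i and which are adjacent to at least one vertex of U has cardinality at least 2|U|. -/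
open SimpleGraph

/-- If `U` is a set of vertices of `AQ_{n,k}` all of whose `n`-th coordinates equal `i`,
then the vertices lying outside the `i`-th layer that are adjacent to some vertex of `U`
number at least `2|U|`. -/
theorem AQ_layer_neighborhood_lower_bound (n k : ℕ) (hn : 2 ≤ n) (hk : 3 ≤ k) (i : ZMod k)
    (U : Set (Fin n → ZMod k)) (hU : ∀ u ∈ U, u ⟨n - 1, by omega⟩ = i) :
    2 * U.ncard ≤ {v | v ⟨n - 1, by omega⟩ ≠ i ∧ ∃ u ∈ U, (AQ n k).Adj u v}.ncard := by
  
  haveI : NeZero k := ⟨by omega⟩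
  haveI : Fact (1 < k) := ⟨by omega⟩
  set m : Fin n := ⟨n - 1, by omega⟩ with hm
  have h1 : (1 : ZMod k) ≠ 0 := one_ne_zero
  have h2 : (2 : ZMod k) ≠ 0 := by
    have : ((2 : ℕ) : ZMod k) ≠ 0 := by
      rw [Ne, ZMod.natCast_eq_zero_iff]
      intro h
      exact absurd (Nat.le_of_dvd (by norm_num) h) (by omega)
    simpa using this
  set f : ZMod k → (Fin n → ZMod k) → (Fin n → ZMod k) :=
    fun s u => Function.update u m (u m + s) with hf
  have hfm : ∀ s u, f s u m = u m + s := fun s u => Function.update_self _ _ _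
  have hinj : ∀ s, Function.Injective (f s) := by
    intro s u v h
    funext j
    by_cases hj : j = m
    · subst hj
      have := congrFun h m
      simpa [f, Function.update_self] using this
    · have := congrFun h j
      simpa [f, Function.update_of_ne hj] using this
  have hadj : ∀ s : ZMod k, (s = 1 ∨ s = -1) → ∀ u, (AQ n k).Adj u (f s u) := by
    intro s hs u
    have hne : u ≠ f s u := by
      intro h
      have := congrFun h m
      rw [hfm] at this
      have hs0 : s = 0 := (left_eq_add.mp this)
      rcases hs with h' | h'
      · exact h1 (h' ▸ hs0)
      · apply h2
        have : (-1 : ZMod k) = 0 := h' ▸ hs0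
        linear_combination -this - this
    refine ⟨hne, Or.inl ⟨m, ?_, fun j hj => Function.update_of_ne hj _ _⟩⟩
    rcases hs with h' | h'
    · left; rw [hfm, h']
    · right; rw [hfm, h']; ring
  set T : Set (Fin n → ZMod k) :=
    {v | v m ≠ i ∧ ∃ u ∈ U, (AQ n k).Adj u v} with hT
  have hsub : f 1 '' U ∪ f (-1) '' U ⊆ T := by
    rintro v (⟨u, hu, rfl⟩ | ⟨u, hu, rfl⟩)
    · refine ⟨?_, u, hu, hadj 1 (Or.inl rfl) u⟩
      rw [hfm, hU u hu]
      intro h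
      exact h1 (left_eq_add.mp h.symm)
    · refine ⟨?_, u, hu, hadj (-1) (Or.inr rfl) u⟩
      rw [hfm, hU u hu]
      intro h
      apply h1
      have : i + -1 = i := h
      linear_combination -this
  have hdisj : Disjoint (f 1 '' U) (f (-1) '' U) := by
    rw [Set.disjoint_left]
    rintro v ⟨u, hu, rfl⟩ ⟨w, hw, hvw⟩
    apply h2
    have e1 : f 1 u m = i + 1 := by rw [hfm, hU u hu]
    have e2 : f (-1) w m = i + -1 := by rw [hfm, hU w hw]
    have e3 : i + 1 = i + -1 := by rw [← e1, ← congrFun hvw m, e2]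
    linear_combination e3
  calc 2 * U.ncard = (f 1 '' U).ncard + (f (-1) '' U).ncard := by
        rw [Set.ncard_image_of_injective _ (hinj 1),
          Set.ncard_image_of_injective _ (hinj (-1))]
        ring
    _ = (f 1 '' U ∪ f (-1) '' U).ncard :=
        (Set.ncard_union_eq hdisj (Set.toFinite _) (Set.toFinite _)).symm
    _ ≤ T.ncard := Set.ncard_le_ncard hsub (Set.toFinite _)
end

section
/- For all integers n ≥ 3 and k ≥ 4, any two distinct vertices u and v of the augmented k-ary n-cube AQ_{n,k} have at most 4 common neighbors. -/
open SimpleGraph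

namespace AQaux


def qE {n : ℕ} (i : Fin n) : Fin n → ℕ := fun m => if m = i then 1 else 0
def qP {n : ℕ} (i : Fin n) : Fin n → ℕ := fun m => if m ≤ i then 1 else 0

def isQn {n : ℕ} (q : Fin n → ℕ) : Prop :=
  (∃ i, q = qE i) ∨ (∃ i, 1 ≤ i.val ∧ q = qP i)

theorem ite_sum_eq {p q r s : Prop} [Decidable p] [Decidable q] [Decidable r] [Decidable s]
    (h : (if p then 1 else 0) + (if q then 1 else 0) = (if r then 1 else 0) + (if s then (1:ℕ) else 0)) :
    ((p ∨ q) ↔ (r ∨ s)) ∧ ((p ∧ q) ↔ (r ∧ s)) := by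
  split_ifs at h <;> simp_all

theorem qE_eq_qE {n : ℕ} {i j : Fin n} : qE i = qE j ↔ i.val = j.val := by
  constructor
  · intro h
    have h1 := congrFun h i
    simp only [qE, Fin.ext_iff] at h1
    split_ifs at h1 <;> omega
  · intro h; have : i = j := Fin.ext h; subst this; rfl

theorem qP_eq_qP {n : ℕ} {i j : Fin n} : qP i = qP j ↔ i.val = j.val := by
  constructor
  · intro h
    have h1 := congrFun h i
    have h2 := congrFun h j
    simp only [qP, Fin.le_def] at h1 h2
    split_ifs at h1 h2 <;> omega
  · intro h; have : i = j := Fin.ext h; subst this; rfl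

theorem qE_eq_qP {n : ℕ} {i a : Fin n} : qE i = qP a ↔ (i.val = 0 ∧ a.val = 0) := by
  constructor
  · intro h
    have h1 := congrFun h ⟨0, i.pos⟩
    have h2 := congrFun h a
    simp only [qE, qP, Fin.ext_iff, Fin.le_def] at h1 h2
    split_ifs at h1 h2 <;> omega
  · rintro ⟨hi, ha⟩
    funext m
    simp only [qE, qP, Fin.ext_iff, Fin.le_def, hi, ha]
    split_ifs <;> omega

theorem qP_eq_qE {n : ℕ} {a i : Fin n} : qP a = qE i ↔ (a.val = 0 ∧ i.val = 0) := by
  rw [eq_comm, qE_eq_qP]; tauto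

theorem isQn_le_one {n : ℕ} {q : Fin n → ℕ} (h : isQn q) : ∀ j, q j ≤ 1 := by
  rcases h with ⟨i, rfl⟩ | ⟨i, _, rfl⟩ <;> intro j <;> simp only [qE, qP] <;> split <;> omega

theorem isQn_exists_one {n : ℕ} {q : Fin n → ℕ} (h : isQn q) : ∃ j, q j = 1 := by
  rcases h with ⟨i, rfl⟩ | ⟨i, _, rfl⟩
  · exact ⟨i, by simp [qE]⟩
  · exact ⟨i, by simp [qP]⟩

set_option maxHeartbeats 1600000 in
private theorem caseEEEE {n : ℕ} (hn : 2 ≤ n) (i1 i2 i3 i4 : Fin n) 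
    (h : ∀ m, qE i1 m + qE i2 m = qE i3 m + qE i4 m) :
    (qE i1 = qE i3 ∧ qE i2 = qE i4) ∨ (qE i1 = qE i4 ∧ qE i2 = qE i3) := by
  have h0 : 0 < n := by omega
  have h1 : 1 < n := by omega
  simp only [qE, qP] at h
  have H1 := ite_sum_eq (h (i1))
  have H2 := ite_sum_eq (h (i2))
  have H3 := ite_sum_eq (h (i3))
  have H4 := ite_sum_eq (h (i4))
  simp only [Fin.ext_iff, Fin.le_def, Fin.val_mk, le_refl, true_or, or_true, true_and, and_true, true_iff, iff_true, false_or, or_false, false_and, and_false, false_iff, iff_false] at H1 H2 H3 H4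
  simp only [qE_eq_qE, qP_eq_qP, qE_eq_qP, qP_eq_qE]
  omega

set_option maxHeartbeats 1600000 in
private theorem caseEEEP {n : ℕ} (hn : 2 ≤ n) (i1 i2 i3 i4 : Fin n) (hc4 : 1 ≤ (i4:Fin n).val)
    (h : ∀ m, qE i1 m + qE i2 m = qE i3 m + qP i4 m) :
    (qE i1 = qE i3 ∧ qE i2 = qP i4) ∨ (qE i1 = qP i4 ∧ qE i2 = qE i3) := by
  have h0 : 0 < n := by omega
  have h1 : 1 < n := by omega
  simp only [qE, qP] at h
  have H1 := ite_sum_eq (h (i1))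
  have H2 := ite_sum_eq (h (i2))
  have H3 := ite_sum_eq (h (i3))
  have H4 := ite_sum_eq (h (i4))
  have H5 := ite_sum_eq (h (⟨0, h0⟩))
  simp only [Fin.ext_iff, Fin.le_def, Fin.val_mk, le_refl, true_or, or_true, true_and, and_true, true_iff, iff_true, false_or, or_false, false_and, and_false, false_iff, iff_false] at H1 H2 H3 H4 H5
  simp only [qE_eq_qE, qP_eq_qP, qE_eq_qP, qP_eq_qE]
  omega

set_option maxHeartbeats 1600000 in
private theorem caseEEPE {n : ℕ} (hn : 2 ≤ n) (i1 i2 i3 i4 : Fin n) (hc3 : 1 ≤ (i3:Fin n).val)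
    (h : ∀ m, qE i1 m + qE i2 m = qP i3 m + qE i4 m) :
    (qE i1 = qP i3 ∧ qE i2 = qE i4) ∨ (qE i1 = qE i4 ∧ qE i2 = qP i3) := by
  have h0 : 0 < n := by omega
  have h1 : 1 < n := by omega
  simp only [qE, qP] at h
  have H1 := ite_sum_eq (h (i1))
  have H2 := ite_sum_eq (h (i2))
  have H3 := ite_sum_eq (h (i3))
  have H4 := ite_sum_eq (h (i4))
  have H5 := ite_sum_eq (h (⟨0, h0⟩))
  simp only [Fin.ext_iff, Fin.le_def, Fin.val_mk, le_refl, true_or, or_true, true_and, and_true, true_iff, iff_true, false_or, or_false, false_and, and_false, false_iff, iff_false] at H1 H2 H3 H4 H5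
  simp only [qE_eq_qE, qP_eq_qP, qE_eq_qP, qP_eq_qE]
  omega

set_option maxHeartbeats 1600000 in
private theorem caseEEPP {n : ℕ} (hn : 2 ≤ n) (i1 i2 i3 i4 : Fin n) (hc3 : 1 ≤ (i3:Fin n).val) (hc4 : 1 ≤ (i4:Fin n).val)
    (h : ∀ m, qE i1 m + qE i2 m = qP i3 m + qP i4 m) :
    (qE i1 = qP i3 ∧ qE i2 = qP i4) ∨ (qE i1 = qP i4 ∧ qE i2 = qP i3) := by
  have h0 : 0 < n := by omega
  have h1 : 1 < n := by omega
  simp only [qE, qP] at h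
  have H1 := ite_sum_eq (h (i1))
  have H2 := ite_sum_eq (h (i2))
  have H3 := ite_sum_eq (h (i3))
  have H4 := ite_sum_eq (h (i4))
  have H5 := ite_sum_eq (h (⟨0, h0⟩))
  have H6 := ite_sum_eq (h (⟨1, h1⟩))
  simp only [Fin.ext_iff, Fin.le_def, Fin.val_mk, le_refl, true_or, or_true, true_and, and_true, true_iff, iff_true, false_or, or_false, false_and, and_false, false_iff, iff_false] at H1 H2 H3 H4 H5 H6
  simp only [qE_eq_qE, qP_eq_qP, qE_eq_qP, qP_eq_qE]
  omega

set_option maxHeartbeats 1600000 in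
private theorem caseEPEE {n : ℕ} (hn : 2 ≤ n) (i1 i2 i3 i4 : Fin n) (hc2 : 1 ≤ (i2:Fin n).val)
    (h : ∀ m, qE i1 m + qP i2 m = qE i3 m + qE i4 m) :
    (qE i1 = qE i3 ∧ qP i2 = qE i4) ∨ (qE i1 = qE i4 ∧ qP i2 = qE i3) := by
  have h0 : 0 < n := by omega
  have h1 : 1 < n := by omega
  simp only [qE, qP] at h
  have H1 := ite_sum_eq (h (i1))
  have H2 := ite_sum_eq (h (i2))
  have H3 := ite_sum_eq (h (i3))
  have H4 := ite_sum_eq (h (i4))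
  have H5 := ite_sum_eq (h (⟨0, h0⟩))
  simp only [Fin.ext_iff, Fin.le_def, Fin.val_mk, le_refl, true_or, or_true, true_and, and_true, true_iff, iff_true, false_or, or_false, false_and, and_false, false_iff, iff_false] at H1 H2 H3 H4 H5
  simp only [qE_eq_qE, qP_eq_qP, qE_eq_qP, qP_eq_qE]
  omega

set_option maxHeartbeats 1600000 in
private theorem caseEPEP {n : ℕ} (hn : 2 ≤ n) (i1 i2 i3 i4 : Fin n) (hc2 : 1 ≤ (i2:Fin n).val) (hc4 : 1 ≤ (i4:Fin n).val)
    (h : ∀ m, qE i1 m + qP i2 m = qE i3 m + qP i4 m) :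
    (qE i1 = qE i3 ∧ qP i2 = qP i4) ∨ (qE i1 = qP i4 ∧ qP i2 = qE i3) := by
  have h0 : 0 < n := by omega
  have h1 : 1 < n := by omega
  simp only [qE, qP] at h
  have H1 := ite_sum_eq (h (i1))
  have H2 := ite_sum_eq (h (i2))
  have H3 := ite_sum_eq (h (i3))
  have H4 := ite_sum_eq (h (i4))
  have H5 := ite_sum_eq (h (⟨0, h0⟩))
  have H6 := ite_sum_eq (h (⟨1, h1⟩))
  simp only [Fin.ext_iff, Fin.le_def, Fin.val_mk, le_refl, true_or, or_true, true_and, and_true, true_iff, iff_true, false_or, or_false, false_and, and_false, false_iff, iff_false] at H1 H2 H3 H4 H5 H6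
  simp only [qE_eq_qE, qP_eq_qP, qE_eq_qP, qP_eq_qE]
  omega

set_option maxHeartbeats 1600000 in
private theorem caseEPPE {n : ℕ} (hn : 2 ≤ n) (i1 i2 i3 i4 : Fin n) (hc2 : 1 ≤ (i2:Fin n).val) (hc3 : 1 ≤ (i3:Fin n).val)
    (h : ∀ m, qE i1 m + qP i2 m = qP i3 m + qE i4 m) :
    (qE i1 = qP i3 ∧ qP i2 = qE i4) ∨ (qE i1 = qE i4 ∧ qP i2 = qP i3) := by
  have h0 : 0 < n := by omega
  have h1 : 1 < n := by omega
  simp only [qE, qP] at h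
  have H1 := ite_sum_eq (h (i1))
  have H2 := ite_sum_eq (h (i2))
  have H3 := ite_sum_eq (h (i3))
  have H4 := ite_sum_eq (h (i4))
  have H5 := ite_sum_eq (h (⟨0, h0⟩))
  have H6 := ite_sum_eq (h (⟨1, h1⟩))
  simp only [Fin.ext_iff, Fin.le_def, Fin.val_mk, le_refl, true_or, or_true, true_and, and_true, true_iff, iff_true, false_or, or_false, false_and, and_false, false_iff, iff_false] at H1 H2 H3 H4 H5 H6
  simp only [qE_eq_qE, qP_eq_qP, qE_eq_qP, qP_eq_qE]
  omega

set_option maxHeartbeats 1600000 in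
private theorem caseEPPP {n : ℕ} (hn : 2 ≤ n) (i1 i2 i3 i4 : Fin n) (hc2 : 1 ≤ (i2:Fin n).val) (hc3 : 1 ≤ (i3:Fin n).val) (hc4 : 1 ≤ (i4:Fin n).val)
    (h : ∀ m, qE i1 m + qP i2 m = qP i3 m + qP i4 m) :
    (qE i1 = qP i3 ∧ qP i2 = qP i4) ∨ (qE i1 = qP i4 ∧ qP i2 = qP i3) := by
  have h0 : 0 < n := by omega
  have h1 : 1 < n := by omega
  simp only [qE, qP] at h
  have H1 := ite_sum_eq (h (i1))
  have H2 := ite_sum_eq (h (i2))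
  have H3 := ite_sum_eq (h (i3))
  have H4 := ite_sum_eq (h (i4))
  have H5 := ite_sum_eq (h (⟨0, h0⟩))
  have H6 := ite_sum_eq (h (⟨1, h1⟩))
  simp only [Fin.ext_iff, Fin.le_def, Fin.val_mk, le_refl, true_or, or_true, true_and, and_true, true_iff, iff_true, false_or, or_false, false_and, and_false, false_iff, iff_false] at H1 H2 H3 H4 H5 H6
  simp only [qE_eq_qE, qP_eq_qP, qE_eq_qP, qP_eq_qE]
  omega

set_option maxHeartbeats 1600000 in
private theorem casePEEE {n : ℕ} (hn : 2 ≤ n) (i1 i2 i3 i4 : Fin n) (hc1 : 1 ≤ (i1:Fin n).val)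
    (h : ∀ m, qP i1 m + qE i2 m = qE i3 m + qE i4 m) :
    (qP i1 = qE i3 ∧ qE i2 = qE i4) ∨ (qP i1 = qE i4 ∧ qE i2 = qE i3) := by
  have h0 : 0 < n := by omega
  have h1 : 1 < n := by omega
  simp only [qE, qP] at h
  have H1 := ite_sum_eq (h (i1))
  have H2 := ite_sum_eq (h (i2))
  have H3 := ite_sum_eq (h (i3))
  have H4 := ite_sum_eq (h (i4))
  have H5 := ite_sum_eq (h (⟨0, h0⟩))
  simp only [Fin.ext_iff, Fin.le_def, Fin.val_mk, le_refl, true_or, or_true, true_and, and_true, true_iff, iff_true, false_or, or_false, false_and, and_false, false_iff, iff_false] at H1 H2 H3 H4 H5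
  simp only [qE_eq_qE, qP_eq_qP, qE_eq_qP, qP_eq_qE]
  omega

set_option maxHeartbeats 1600000 in
private theorem casePEEP {n : ℕ} (hn : 2 ≤ n) (i1 i2 i3 i4 : Fin n) (hc1 : 1 ≤ (i1:Fin n).val) (hc4 : 1 ≤ (i4:Fin n).val)
    (h : ∀ m, qP i1 m + qE i2 m = qE i3 m + qP i4 m) :
    (qP i1 = qE i3 ∧ qE i2 = qP i4) ∨ (qP i1 = qP i4 ∧ qE i2 = qE i3) := by
  have h0 : 0 < n := by omega
  have h1 : 1 < n := by omega
  simp only [qE, qP] at h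
  have H1 := ite_sum_eq (h (i1))
  have H2 := ite_sum_eq (h (i2))
  have H3 := ite_sum_eq (h (i3))
  have H4 := ite_sum_eq (h (i4))
  have H5 := ite_sum_eq (h (⟨0, h0⟩))
  have H6 := ite_sum_eq (h (⟨1, h1⟩))
  simp only [Fin.ext_iff, Fin.le_def, Fin.val_mk, le_refl, true_or, or_true, true_and, and_true, true_iff, iff_true, false_or, or_false, false_and, and_false, false_iff, iff_false] at H1 H2 H3 H4 H5 H6
  simp only [qE_eq_qE, qP_eq_qP, qE_eq_qP, qP_eq_qE]
  omega

set_option maxHeartbeats 1600000 in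
private theorem casePEPE {n : ℕ} (hn : 2 ≤ n) (i1 i2 i3 i4 : Fin n) (hc1 : 1 ≤ (i1:Fin n).val) (hc3 : 1 ≤ (i3:Fin n).val)
    (h : ∀ m, qP i1 m + qE i2 m = qP i3 m + qE i4 m) :
    (qP i1 = qP i3 ∧ qE i2 = qE i4) ∨ (qP i1 = qE i4 ∧ qE i2 = qP i3) := by
  have h0 : 0 < n := by omega
  have h1 : 1 < n := by omega
  simp only [qE, qP] at h
  have H1 := ite_sum_eq (h (i1))
  have H2 := ite_sum_eq (h (i2))
  have H3 := ite_sum_eq (h (i3))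
  have H4 := ite_sum_eq (h (i4))
  have H5 := ite_sum_eq (h (⟨0, h0⟩))
  have H6 := ite_sum_eq (h (⟨1, h1⟩))
  simp only [Fin.ext_iff, Fin.le_def, Fin.val_mk, le_refl, true_or, or_true, true_and, and_true, true_iff, iff_true, false_or, or_false, false_and, and_false, false_iff, iff_false] at H1 H2 H3 H4 H5 H6
  simp only [qE_eq_qE, qP_eq_qP, qE_eq_qP, qP_eq_qE]
  omega

set_option maxHeartbeats 1600000 in
private theorem casePEPP {n : ℕ} (hn : 2 ≤ n) (i1 i2 i3 i4 : Fin n) (hc1 : 1 ≤ (i1:Fin n).val) (hc3 : 1 ≤ (i3:Fin n).val) (hc4 : 1 ≤ (i4:Fin n).val)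
    (h : ∀ m, qP i1 m + qE i2 m = qP i3 m + qP i4 m) :
    (qP i1 = qP i3 ∧ qE i2 = qP i4) ∨ (qP i1 = qP i4 ∧ qE i2 = qP i3) := by
  have h0 : 0 < n := by omega
  have h1 : 1 < n := by omega
  simp only [qE, qP] at h
  have H1 := ite_sum_eq (h (i1))
  have H2 := ite_sum_eq (h (i2))
  have H3 := ite_sum_eq (h (i3))
  have H4 := ite_sum_eq (h (i4))
  have H5 := ite_sum_eq (h (⟨0, h0⟩))
  have H6 := ite_sum_eq (h (⟨1, h1⟩))
  simp only [Fin.ext_iff, Fin.le_def, Fin.val_mk, le_refl, true_or, or_true, true_and, and_true, true_iff, iff_true, false_or, or_false, false_and, and_false, false_iff, iff_false] at H1 H2 H3 H4 H5 H6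
  simp only [qE_eq_qE, qP_eq_qP, qE_eq_qP, qP_eq_qE]
  omega

set_option maxHeartbeats 1600000 in
private theorem casePPEE {n : ℕ} (hn : 2 ≤ n) (i1 i2 i3 i4 : Fin n) (hc1 : 1 ≤ (i1:Fin n).val) (hc2 : 1 ≤ (i2:Fin n).val)
    (h : ∀ m, qP i1 m + qP i2 m = qE i3 m + qE i4 m) :
    (qP i1 = qE i3 ∧ qP i2 = qE i4) ∨ (qP i1 = qE i4 ∧ qP i2 = qE i3) := by
  have h0 : 0 < n := by omega
  have h1 : 1 < n := by omega
  simp only [qE, qP] at h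
  have H1 := ite_sum_eq (h (i1))
  have H2 := ite_sum_eq (h (i2))
  have H3 := ite_sum_eq (h (i3))
  have H4 := ite_sum_eq (h (i4))
  have H5 := ite_sum_eq (h (⟨0, h0⟩))
  have H6 := ite_sum_eq (h (⟨1, h1⟩))
  simp only [Fin.ext_iff, Fin.le_def, Fin.val_mk, le_refl, true_or, or_true, true_and, and_true, true_iff, iff_true, false_or, or_false, false_and, and_false, false_iff, iff_false] at H1 H2 H3 H4 H5 H6
  simp only [qE_eq_qE, qP_eq_qP, qE_eq_qP, qP_eq_qE]
  omega

set_option maxHeartbeats 1600000 in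
private theorem casePPEP {n : ℕ} (hn : 2 ≤ n) (i1 i2 i3 i4 : Fin n) (hc1 : 1 ≤ (i1:Fin n).val) (hc2 : 1 ≤ (i2:Fin n).val) (hc4 : 1 ≤ (i4:Fin n).val)
    (h : ∀ m, qP i1 m + qP i2 m = qE i3 m + qP i4 m) :
    (qP i1 = qE i3 ∧ qP i2 = qP i4) ∨ (qP i1 = qP i4 ∧ qP i2 = qE i3) := by
  have h0 : 0 < n := by omega
  have h1 : 1 < n := by omega
  simp only [qE, qP] at h
  have H1 := ite_sum_eq (h (i1))
  have H2 := ite_sum_eq (h (i2))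
  have H3 := ite_sum_eq (h (i3))
  have H4 := ite_sum_eq (h (i4))
  have H5 := ite_sum_eq (h (⟨0, h0⟩))
  have H6 := ite_sum_eq (h (⟨1, h1⟩))
  simp only [Fin.ext_iff, Fin.le_def, Fin.val_mk, le_refl, true_or, or_true, true_and, and_true, true_iff, iff_true, false_or, or_false, false_and, and_false, false_iff, iff_false] at H1 H2 H3 H4 H5 H6
  simp only [qE_eq_qE, qP_eq_qP, qE_eq_qP, qP_eq_qE]
  omega

set_option maxHeartbeats 1600000 in
private theorem casePPPE {n : ℕ} (hn : 2 ≤ n) (i1 i2 i3 i4 : Fin n) (hc1 : 1 ≤ (i1:Fin n).val) (hc2 : 1 ≤ (i2:Fin n).val) (hc3 : 1 ≤ (i3:Fin n).val)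
    (h : ∀ m, qP i1 m + qP i2 m = qP i3 m + qE i4 m) :
    (qP i1 = qP i3 ∧ qP i2 = qE i4) ∨ (qP i1 = qE i4 ∧ qP i2 = qP i3) := by
  have h0 : 0 < n := by omega
  have h1 : 1 < n := by omega
  simp only [qE, qP] at h
  have H1 := ite_sum_eq (h (i1))
  have H2 := ite_sum_eq (h (i2))
  have H3 := ite_sum_eq (h (i3))
  have H4 := ite_sum_eq (h (i4))
  have H5 := ite_sum_eq (h (⟨0, h0⟩))
  have H6 := ite_sum_eq (h (⟨1, h1⟩))
  simp only [Fin.ext_iff, Fin.le_def, Fin.val_mk, le_refl, true_or, or_true, true_and, and_true, true_iff, iff_true, false_or, or_false, false_and, and_false, false_iff, iff_false] at H1 H2 H3 H4 H5 H6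
  simp only [qE_eq_qE, qP_eq_qP, qE_eq_qP, qP_eq_qE]
  omega

set_option maxHeartbeats 1600000 in
private theorem casePPPP {n : ℕ} (hn : 2 ≤ n) (i1 i2 i3 i4 : Fin n) (hc1 : 1 ≤ (i1:Fin n).val) (hc2 : 1 ≤ (i2:Fin n).val) (hc3 : 1 ≤ (i3:Fin n).val) (hc4 : 1 ≤ (i4:Fin n).val)
    (h : ∀ m, qP i1 m + qP i2 m = qP i3 m + qP i4 m) :
    (qP i1 = qP i3 ∧ qP i2 = qP i4) ∨ (qP i1 = qP i4 ∧ qP i2 = qP i3) := by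
  have h0 : 0 < n := by omega
  have h1 : 1 < n := by omega
  simp only [qE, qP] at h
  have H1 := ite_sum_eq (h (i1))
  have H2 := ite_sum_eq (h (i2))
  have H3 := ite_sum_eq (h (i3))
  have H4 := ite_sum_eq (h (i4))
  have H5 := ite_sum_eq (h (⟨0, h0⟩))
  have H6 := ite_sum_eq (h (⟨1, h1⟩))
  simp only [Fin.ext_iff, Fin.le_def, Fin.val_mk, le_refl, true_or, or_true, true_and, and_true, true_iff, iff_true, false_or, or_false, false_and, and_false, false_iff, iff_false] at H1 H2 H3 H4 H5 H6
  simp only [qE_eq_qE, qP_eq_qP, qE_eq_qP, qP_eq_qE]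
  omega

theorem sumQn {n : ℕ} (hn : 2 ≤ n) {a b c d : Fin n → ℕ}
    (ha : isQn a) (hb : isQn b) (hc : isQn c) (hd : isQn d)
    (h : ∀ m, a m + b m = c m + d m) :
    (a = c ∧ b = d) ∨ (a = d ∧ b = c) := by
  rcases ha with ⟨i1, rfl⟩ | ⟨i1, hc1, rfl⟩ <;>
    rcases hb with ⟨i2, rfl⟩ | ⟨i2, hc2, rfl⟩ <;>
      rcases hc with ⟨i3, rfl⟩ | ⟨i3, hc3, rfl⟩ <;>
        rcases hd with ⟨i4, rfl⟩ | ⟨i4, hc4, rfl⟩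
  · exact caseEEEE hn i1 i2 i3 i4  h
  · exact caseEEEP hn i1 i2 i3 i4 hc4 h
  · exact caseEEPE hn i1 i2 i3 i4 hc3 h
  · exact caseEEPP hn i1 i2 i3 i4 hc3 hc4 h
  · exact caseEPEE hn i1 i2 i3 i4 hc2 h
  · exact caseEPEP hn i1 i2 i3 i4 hc2 hc4 h
  · exact caseEPPE hn i1 i2 i3 i4 hc2 hc3 h
  · exact caseEPPP hn i1 i2 i3 i4 hc2 hc3 hc4 h
  · exact casePEEE hn i1 i2 i3 i4 hc1 h
  · exact casePEEP hn i1 i2 i3 i4 hc1 hc4 h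
  · exact casePEPE hn i1 i2 i3 i4 hc1 hc3 h
  · exact casePEPP hn i1 i2 i3 i4 hc1 hc3 hc4 h
  · exact casePPEE hn i1 i2 i3 i4 hc1 hc2 h
  · exact casePPEP hn i1 i2 i3 i4 hc1 hc2 hc4 h
  · exact casePPPE hn i1 i2 i3 i4 hc1 hc2 hc3 h
  · exact casePPPP hn i1 i2 i3 i4 hc1 hc2 hc3 hc4 h

theorem natCast_inj_small {k x y : ℕ} (hk : 0 < k) (hx : x < k) (hy : y < k)
    (h : (x : ZMod k) = y) : x = y := by
  haveI : NeZero k := ⟨by omega⟩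
  rw [← ZMod.val_cast_of_lt hx, ← ZMod.val_cast_of_lt hy, h]

theorem sumQZ {n k : ℕ} (hn : 2 ≤ n) (hk : 4 ≤ k) {a b c d : Fin n → ℕ}
    (ha : isQn a) (hb : isQn b) (hc : isQn c) (hd : isQn d)
    (h : ∀ j, ((a j : ZMod k)) + (b j : ZMod k) = (c j : ZMod k) + (d j : ZMod k)) :
    (a = c ∧ b = d) ∨ (a = d ∧ b = c) := by
  refine sumQn hn ha hb hc hd (fun m => ?_)
  have h1 := isQn_le_one ha m; have h2 := isQn_le_one hb m
  have h3 := isQn_le_one hc m; have h4 := isQn_le_one hd m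
  have hcast : ((a m + b m : ℕ) : ZMod k) = ((c m + d m : ℕ) : ZMod k) := by
    push_cast; exact h m
  exact natCast_inj_small (by omega) (by omega) (by omega) hcast

theorem negsum {n k : ℕ} (hk : 4 ≤ k) {a b c d : Fin n → ℕ}
    (ha : isQn a) (hb : isQn b) (hc : isQn c) (hd : isQn d)
    (h : ∀ j, ((a j : ZMod k)) + (b j : ZMod k) + ((c j : ZMod k) + (d j : ZMod k)) = 0) :
    ∀ j, a j = b j ∧ b j = c j ∧ c j = d j := by
  intro j
  have h1 := isQn_le_one ha j; have h2 := isQn_le_one hb j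
  have h3 := isQn_le_one hc j; have h4 := isQn_le_one hd j
  have hz : ((a j + b j + c j + d j : ℕ) : ZMod k) = 0 := by push_cast; linear_combination h j
  rw [ZMod.natCast_eq_zero_iff] at hz
  rcases hz with ⟨e, he⟩
  rcases Nat.eq_zero_or_pos e with rfl | hpos
  · omega
  · have : k * e ≥ k := Nat.le_mul_of_pos_right k hpos
    omega


theorem one_ne_zero' {k : ℕ} (hk : 4 ≤ k) : (1 : ZMod k) ≠ 0 := by
  intro h0
  have : (1 : ℕ) = 0 := by
    refine natCast_inj_small (k := k) (x := 1) (y := 0) (by omega) (by omega) (by omega) ?_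
    push_cast
    exact h0
  omega

theorem adj_iff {n k : ℕ} (hk : 4 ≤ k) {u w : Fin n → ZMod k} :
    (AQ n k).Adj u w ↔ ∃ q, isQn q ∧
      ((∀ j, w j = u j + (q j : ZMod k)) ∨ (∀ j, w j = u j - (q j : ZMod k))) := by
  constructor
  · rintro ⟨hne, ⟨i, hcase, hrest⟩ | ⟨i, hi1, hcase, hrest⟩⟩
    · refine ⟨qE i, Or.inl ⟨i, rfl⟩, ?_⟩
      rcases hcase with hc | hc
      · left; intro j
        by_cases hj : j = i
        · subst hj; simpa [qE] using hc
        · have := hrest j hj; simp [qE, hj, this]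
      · right; intro j
        by_cases hj : j = i
        · subst hj; simpa [qE] using hc
        · have := hrest j hj; simp [qE, hj, this]
    · refine ⟨qP i, Or.inr ⟨i, hi1, rfl⟩, ?_⟩
      rcases hcase with hc | hc
      · left; intro j
        by_cases hj : j ≤ i
        · simpa [qP, hj] using hc j hj
        · have := hrest j (not_le.mp hj); simp [qP, hj, this]
      · right; intro j
        by_cases hj : j ≤ i
        · simpa [qP, hj] using hc j hj
        · have := hrest j (not_le.mp hj); simp [qP, hj, this]
  · rintro ⟨q, hq, hsig⟩
    obtain ⟨j0, hj0⟩ := isQn_exists_one hq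
    constructor
    · intro he
      rcases hsig with hs | hs
      · have h1 := hs j0
        rw [← he, hj0] at h1
        simp only [Nat.cast_one, left_eq_add] at h1
        exact one_ne_zero' hk h1
      · have h1 := hs j0
        rw [← he, hj0] at h1
        push_cast at h1
        have : (1 : ZMod k) = 0 := by linear_combination h1
        exact one_ne_zero' hk this
    · rcases hq with ⟨i, rfl⟩ | ⟨i, hi1, rfl⟩
      · left
        refine ⟨i, ?_, ?_⟩
        · rcases hsig with hs | hs
          · left; simpa [qE] using hs i
          · right; simpa [qE] using hs i
        · intro j hj
          rcases hsig with hs | hs <;> have := hs j <;> simp [qE, hj] at this <;> simp [this]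
      · right
        refine ⟨i, hi1, ?_, ?_⟩
        · rcases hsig with hs | hs
          · left; intro j hj; simpa [qP, hj] using hs j
          · right; intro j hj; simpa [qP, hj] using hs j
        · intro j hj
          rcases hsig with hs | hs <;> have := hs j <;>
            simp [qP, not_le.mpr hj] at this <;> simp [this]

theorem ncard_le_four {α : Type*} (x1 x2 x3 x4 : α) :
    ({x1, x2, x3, x4} : Set α).ncard ≤ 4 := by
  have h1 := Set.ncard_insert_le x1 ({x2, x3, x4} : Set α)
  have h2 := Set.ncard_insert_le x2 ({x3, x4} : Set α)
  have h3 := Set.ncard_insert_le x3 ({x4} : Set α)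
  have h4 := Set.ncard_singleton x4
  omega


end AQaux

-- main theorem, to be appended after part4 content
open AQaux

/-- For all integers `n ≥ 3` and `k ≥ 4`, any two distinct vertices of `AQ_{n,k}` have at
most `4` common neighbours. -/
theorem AQ_common_neighbors_le (n k : ℕ) (hn : 3 ≤ n) (hk : 4 ≤ k)
    (u v : Fin n → ZMod k) (huv : u ≠ v) :
    ((AQ n k).neighborSet u ∩ (AQ n k).neighborSet v).ncard ≤ 4 := by
  classical
  have hn2 : 2 ≤ n := by omega
  have hc0 : ∃ j, v j - u j ≠ 0 := by
    by_contra hall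
    push_neg at hall
    exact huv (funext fun j => (sub_eq_zero.mp (hall j)).symm)
  -- every common neighbour has one of four representation types
  have key : ∀ w ∈ (AQ n k).neighborSet u ∩ (AQ n k).neighborSet v,
      ∃ q r, isQn q ∧ isQn r ∧
        (((∀ j, w j = u j + (q j : ZMod k)) ∧ (∀ j, (q j : ZMod k) - r j = v j - u j)) ∨
         ((∀ j, w j = u j + (q j : ZMod k)) ∧ (∀ j, (q j : ZMod k) + r j = v j - u j)) ∨
         ((∀ j, w j = u j - (q j : ZMod k)) ∧ (∀ j, (r j : ZMod k) - q j = v j - u j)) ∨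
         ((∀ j, w j = u j - (q j : ZMod k)) ∧ (∀ j, (q j : ZMod k) + r j + (v j - u j) = 0))) := by
    rintro w ⟨hwu, hwv⟩
    rw [SimpleGraph.mem_neighborSet] at hwu hwv
    obtain ⟨q, hq, hqs⟩ := (adj_iff hk).mp hwu
    obtain ⟨r, hr, hrs⟩ := (adj_iff hk).mp hwv
    refine ⟨q, r, hq, hr, ?_⟩
    rcases hqs with h1 | h1 <;> rcases hrs with h2 | h2
    · exact Or.inl ⟨h1, fun j => by linear_combination (h2 j) - (h1 j)⟩
    · exact Or.inr (Or.inl ⟨h1, fun j => by linear_combination (h2 j) - (h1 j)⟩)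
    · exact Or.inr (Or.inr (Or.inr ⟨h1, fun j => by linear_combination (h1 j) - (h2 j)⟩))
    · exact Or.inr (Or.inr (Or.inl ⟨h1, fun j => by linear_combination (h2 j) - (h1 j)⟩))
  by_cases hA : (∃ q r, isQn q ∧ isQn r ∧ ∀ j, (q j : ZMod k) + r j = v j - u j) ∧
      (∃ q r, isQn q ∧ isQn r ∧ ∀ j, (q j : ZMod k) + r j + (v j - u j) = 0)
  · -- both sum types realizable: at most 2 common neighbours
    obtain ⟨⟨a1, b1, ha1, hb1, e1⟩, ⟨a2, b2, ha2, hb2, e2⟩⟩ := hA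
    have hpt := negsum hk ha2 hb2 ha1 hb1 (fun j => by linear_combination (e2 j) + (e1 j))
    obtain ⟨j0, hj0⟩ := isQn_exists_one ha1
    have hb1j : b1 j0 = 1 := by have := hpt j0; omega
    have hab : b1 = a1 := funext fun j => by have := hpt j; omega
    have ha2a : a2 = a1 := funext fun j => by have := hpt j; omega
    have hb2a : b2 = a1 := funext fun j => by have := hpt j; omega
    have hsub : (AQ n k).neighborSet u ∩ (AQ n k).neighborSet v ⊆
        {fun j => u j + (a1 j : ZMod k), fun j => u j - (a1 j : ZMod k)} := by
      intro w hw
      obtain ⟨q, r, hq, hr, hcase⟩ := key w hw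
      have e1j : ((a1 j0 : ZMod k)) + (b1 j0 : ZMod k) = v j0 - u j0 := e1 j0
      rw [hj0, hb1j] at e1j
      push_cast at e1j
      rcases hcase with ⟨hw1, he⟩ | ⟨hw1, he⟩ | ⟨hw1, he⟩ | ⟨hw1, he⟩
      · exfalso
        have h2 : ((q j0 : ℕ) : ZMod k) = ((r j0 + 2 : ℕ) : ZMod k) := by
          push_cast
          linear_combination (he j0) - e1j
        have hq1 := isQn_le_one hq j0
        have hr1 := isQn_le_one hr j0
        have := natCast_inj_small (k := k) (by omega) (by omega) (by omega) h2
        omega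
      · have hs := sumQZ hn2 hk hq hr ha1 hb1 (fun j => by rw [he j, e1 j])
        have hqa : q = a1 := by
          rcases hs with ⟨h, _⟩ | ⟨h, _⟩
          · exact h
          · rw [h]; exact hab
        have hwx : w = fun j => u j + (a1 j : ZMod k) := funext fun j => by rw [hw1 j, hqa]
        rw [Set.mem_insert_iff, Set.mem_singleton_iff]
        exact Or.inl hwx
      · exfalso
        have h2 : ((r j0 : ℕ) : ZMod k) = ((q j0 + 2 : ℕ) : ZMod k) := by
          push_cast
          linear_combination (he j0) - e1j
        have hq1 := isQn_le_one hq j0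
        have hr1 := isQn_le_one hr j0
        have := natCast_inj_small (k := k) (by omega) (by omega) (by omega) h2
        omega
      · have hs := sumQZ hn2 hk hq hr ha2 hb2 (fun j => by linear_combination (he j) - (e2 j))
        have hqa : q = a1 := by
          rcases hs with ⟨h, _⟩ | ⟨h, _⟩
          · rw [h]; exact ha2a
          · rw [h]; exact hb2a
        have hwx : w = fun j => u j - (a1 j : ZMod k) := funext fun j => by rw [hw1 j, hqa]
        rw [Set.mem_insert_iff, Set.mem_singleton_iff]
        exact Or.inr hwx
    have hfin : ({fun j => u j + (a1 j : ZMod k), fun j => u j - (a1 j : ZMod k)} :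
        Set (Fin n → ZMod k)).Finite := Set.toFinite _
    have h1 := Set.ncard_le_ncard hsub hfin
    have h2 := Set.ncard_insert_le (fun j => u j + (a1 j : ZMod k))
      ({fun j => u j - (a1 j : ZMod k)} : Set (Fin n → ZMod k))
    have h3 := Set.ncard_singleton (fun j => u j - (a1 j : ZMod k))
    omega
  · -- at least one of the two "sum" types is not realizable
    have cand1 : ∃ x, ∀ (w : Fin n → ZMod k) (q r : Fin n → ℕ), isQn q → isQn r →
        (∀ j, w j = u j + (q j : ZMod k)) → (∀ j, (q j : ZMod k) - r j = v j - u j) →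
        w = x := by
      by_cases h : ∃ q r, isQn q ∧ isQn r ∧ ∀ j, (q j : ZMod k) - r j = v j - u j
      · obtain ⟨q0, r0, hq0, hr0, he0⟩ := h
        refine ⟨fun j => u j + (q0 j : ZMod k), ?_⟩
        intro w q r hq hr hw he
        have hs := sumQZ hn2 hk hq hr0 hq0 hr
          (fun j => by linear_combination (he j) - (he0 j))
        rcases hs with ⟨hqq, _⟩ | ⟨hq1, _⟩
        · funext j; rw [hw j, hqq]
        · exfalso
          obtain ⟨j1, hj1⟩ := hc0
          apply hj1
          rw [← he j1, hq1, sub_self]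
      · exact ⟨u, fun w q r hq hr hw he => absurd ⟨q, r, hq, hr, he⟩ h⟩
    have cand2 : ∃ x, ∀ (w : Fin n → ZMod k) (q r : Fin n → ℕ), isQn q → isQn r →
        (∀ j, w j = u j - (q j : ZMod k)) → (∀ j, (r j : ZMod k) - q j = v j - u j) →
        w = x := by
      by_cases h : ∃ q r, isQn q ∧ isQn r ∧ ∀ j, (r j : ZMod k) - q j = v j - u j
      · obtain ⟨q0, r0, hq0, hr0, he0⟩ := h
        refine ⟨fun j => u j - (q0 j : ZMod k), ?_⟩
        intro w q r hq hr hw he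
        have hs := sumQZ hn2 hk hr hq0 hr0 hq
          (fun j => by linear_combination (he j) - (he0 j))
        rcases hs with ⟨_, hqq⟩ | ⟨hq1, _⟩
        · funext j; rw [hw j, ← hqq]
        · exfalso
          obtain ⟨j1, hj1⟩ := hc0
          apply hj1
          rw [← he j1, ← hq1, sub_self]
      · exact ⟨u, fun w q r hq hr hw he => absurd ⟨q, r, hq, hr, he⟩ h⟩
    obtain ⟨x1, hx1⟩ := cand1
    obtain ⟨x2, hx2⟩ := cand2
    rcases not_and_or.mp hA with hno | hno
    · -- no (+,-) rep; build candidates for (-,+)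
      have cand4 : ∃ x y, ∀ (w : Fin n → ZMod k) (q r : Fin n → ℕ), isQn q → isQn r →
          (∀ j, w j = u j - (q j : ZMod k)) → (∀ j, (q j : ZMod k) + r j + (v j - u j) = 0) →
          (w = x ∨ w = y) := by
        by_cases h : ∃ q r, isQn q ∧ isQn r ∧ ∀ j, (q j : ZMod k) + r j + (v j - u j) = 0
        · obtain ⟨q0, r0, hq0, hr0, he0⟩ := h
          refine ⟨fun j => u j - (q0 j : ZMod k), fun j => u j - (r0 j : ZMod k), ?_⟩
          intro w q r hq hr hw he
          have hs := sumQZ hn2 hk hq hr hq0 hr0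
            (fun j => by linear_combination (he j) - (he0 j))
          rcases hs with ⟨hqq, _⟩ | ⟨hqq, _⟩
          · left; funext j; rw [hw j, hqq]
          · right; funext j; rw [hw j, hqq]
        · exact ⟨u, u, fun w q r hq hr hw he => absurd ⟨q, r, hq, hr, he⟩ h⟩
      obtain ⟨y1, y2, hy⟩ := cand4
      have hsub : (AQ n k).neighborSet u ∩ (AQ n k).neighborSet v ⊆
          {x1, x2, y1, y2} := by
        intro w hw
        obtain ⟨q, r, hq, hr, hcase⟩ := key w hw
        simp only [Set.mem_insert_iff, Set.mem_singleton_iff]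
        rcases hcase with ⟨hw1, he⟩ | ⟨hw1, he⟩ | ⟨hw1, he⟩ | ⟨hw1, he⟩
        · exact Or.inl (hx1 w q r hq hr hw1 he)
        · exact absurd ⟨q, r, hq, hr, he⟩ hno
        · exact Or.inr (Or.inl (hx2 w q r hq hr hw1 he))
        · rcases hy w q r hq hr hw1 he with h | h
          · exact Or.inr (Or.inr (Or.inl h))
          · exact Or.inr (Or.inr (Or.inr h))
      have h1 := Set.ncard_le_ncard hsub (Set.toFinite _)
      have h2 := ncard_le_four x1 x2 y1 y2
      omega
    · -- no (-,+) rep; build candidates for (+,-)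
      have cand3 : ∃ x y, ∀ (w : Fin n → ZMod k) (q r : Fin n → ℕ), isQn q → isQn r →
          (∀ j, w j = u j + (q j : ZMod k)) → (∀ j, (q j : ZMod k) + r j = v j - u j) →
          (w = x ∨ w = y) := by
        by_cases h : ∃ q r, isQn q ∧ isQn r ∧ ∀ j, (q j : ZMod k) + r j = v j - u j
        · obtain ⟨q0, r0, hq0, hr0, he0⟩ := h
          refine ⟨fun j => u j + (q0 j : ZMod k), fun j => u j + (r0 j : ZMod k), ?_⟩
          intro w q r hq hr hw he
          have hs := sumQZ hn2 hk hq hr hq0 hr0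
            (fun j => by rw [he j, he0 j])
          rcases hs with ⟨hqq, _⟩ | ⟨hqq, _⟩
          · left; funext j; rw [hw j, hqq]
          · right; funext j; rw [hw j, hqq]
        · exact ⟨u, u, fun w q r hq hr hw he => absurd ⟨q, r, hq, hr, he⟩ h⟩
      obtain ⟨y1, y2, hy⟩ := cand3
      have hsub : (AQ n k).neighborSet u ∩ (AQ n k).neighborSet v ⊆
          {x1, x2, y1, y2} := by
        intro w hw
        obtain ⟨q, r, hq, hr, hcase⟩ := key w hw
        simp only [Set.mem_insert_iff, Set.mem_singleton_iff]
        rcases hcase with ⟨hw1, he⟩ | ⟨hw1, he⟩ | ⟨hw1, he⟩ | ⟨hw1, he⟩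
        · exact Or.inl (hx1 w q r hq hr hw1 he)
        · rcases hy w q r hq hr hw1 he with h | h
          · exact Or.inr (Or.inr (Or.inl h))
          · exact Or.inr (Or.inr (Or.inr h))
        · exact Or.inr (Or.inl (hx2 w q r hq hr hw1 he))
        · exact absurd ⟨q, r, hq, hr, he⟩ hno
      have h1 := Set.ncard_le_ncard hsub (Set.toFinite _)
      have h2 := ncard_le_four x1 x2 y1 y2
      omega
end
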